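/- For n ≥ 1, the real symplectic group Sp(2n,ℝ) := {g ∈ GL_{2n}(ℝ) : gᵀ J g = J}, regarded as a subgroup of GL_{2n}(ℂ) (its elements preserve the Hermitian form h), acts transitively on the set D⁺ = {[z] ∈ ℙ(ℂ^{2n}) : h(z,z) > 0} of h-positive lines, and acts transitively on the set D⁻ = {[z] ∈ ℙ(ℂ^{2n}) : h(z,z) < 0} of h-negative lines. -/

import Mathlib

open Matrix
open scoped ComplexOrder

noncomputable section

/-- The complex matrix `J = [[0, -I], [I, 0]]` on `ℂ^{2n} = ℂ^n ⊕ ℂ^n`. -/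
def Jmat (n : ℕ) : Matrix (Fin n ⊕ Fin n) (Fin n ⊕ Fin n) ℂ :=
  Matrix.fromBlocks (0 : Matrix (Fin n) (Fin n) ℂ) (-1) 1 0

/-- The real matrix `J = [[0, -I], [I, 0]]` on `ℝ^{2n} = ℝ^n ⊕ ℝ^n`. -/
def JmatR (n : ℕ) : Matrix (Fin n ⊕ Fin n) (Fin n ⊕ Fin n) ℝ :=
  Matrix.fromBlocks (0 : Matrix (Fin n) (Fin n) ℝ) (-1) 1 0

/-- The Hermitian form `h(z, w) = (i/2) z̄ᵀ J w` of signature `(n, n)` on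
`ℂ^{2n}`. -/
def hform (n : ℕ) (z w : Fin n ⊕ Fin n → ℂ) : ℂ :=
  (Complex.I / 2) * (star z ⬝ᵥ (Jmat n *ᵥ w))

/-- The real symplectic group `Sp(2n, ℝ) = {g ∈ GL(2n, ℝ) : gᵀ J g = J}`. -/
def SpR (n : ℕ) : Set (Matrix (Fin n ⊕ Fin n) (Fin n ⊕ Fin n) ℝ) :=
  {g | g.det ≠ 0 ∧ gᵀ * JmatR n * g = JmatR n}

/-- The set `D⁺` of `h`-positive lines in `ℙ(ℂ^{2n})`. -/
def Dpos (n : ℕ) : Set (Projectivization ℂ (Fin n ⊕ Fin n → ℂ)) :=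
  {x | ∃ (z : Fin n ⊕ Fin n → ℂ) (hz : z ≠ 0),
    0 < hform n z z ∧ Projectivization.mk ℂ z hz = x}

/-- The set `D⁻` of `h`-negative lines in `ℙ(ℂ^{2n})`. -/
def Dneg (n : ℕ) : Set (Projectivization ℂ (Fin n ⊕ Fin n → ℂ)) :=
  {x | ∃ (z : Fin n ⊕ Fin n → ℂ) (hz : z ≠ 0),
    hform n z z < 0 ∧ Projectivization.mk ℂ z hz = x}

/-- Two points of `ℙ(ℂ^{2n})` lie in the same `Sp(2n,ℝ)`-orbit, where a real
symplectic matrix acts on `ℂ^{2n}` via its complexification. -/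
def SameOrbitSp (n : ℕ) (x y : Projectivization ℂ (Fin n ⊕ Fin n → ℂ)) : Prop :=
  ∃ g ∈ SpR n, ∃ (z : Fin n ⊕ Fin n → ℂ) (hz : z ≠ 0)
    (hgz : (g.map Complex.ofReal) *ᵥ z ≠ 0),
      Projectivization.mk ℂ z hz = x ∧
        Projectivization.mk ℂ ((g.map Complex.ofReal) *ᵥ z) hgz = y

/-!
Write `z = x + i y` with `x, y` real. Then `h(z, z) = ω(y, x)` for the real symplectic form
`ω(u, v) = uᵀ J v`, and a real matrix acts on `x` and `y` separately. Symplectic transvections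
`v ↦ v + c ω(v, u) u` show that `Sp(2n, ℝ)` acts transitively on pairs `(y, x)` with a prescribed
nonzero value of `ω(y, x)`; rescaling `z` by a real number `t` multiplies `ω(y, x)` by `t²`.
Hence any two lines on which `h` has the same sign lie in one orbit.
-/

def Matrix.symplecticForm (l R : Type*) [DecidableEq l] [Fintype l] [CommRing R] :
    LinearMap.BilinForm R (l ⊕ l → R) :=
  (J l R).toBilin'

local notation "ω" => Matrix.symplecticForm _ _

namespace Matrix

variable {l R K : Type*} [DecidableEq l] [Fintype l]

section CommRing

variable [CommRing R]

theorem symplecticForm_apply (x y : l ⊕ l → R) : ω x y = x ⬝ᵥ J l R *ᵥ y :=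
  toBilin'_apply' ..

theorem symplecticForm_isAlt : LinearMap.IsAlt (symplecticForm l R) := by
  intro x
  rw [symplecticForm_apply, ← Sum.elim_comp_inl_inr x, J, fromBlocks_mulVec,
    sumElim_dotProduct_sumElim]
  simp [neg_mulVec, dotProduct_comm (x ∘ Sum.inl)]

theorem mem_symplecticGroup_iff_symplecticForm {A : Matrix (l ⊕ l) (l ⊕ l) R} :
    A ∈ symplecticGroup l R ↔ ∀ x y, ω (A *ᵥ x) (A *ᵥ y) = ω x y := by
  rw [SymplecticGroup.mem_iff', ← toBilin'.injective.eq_iff, ← toBilin'_comp,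
    LinearMap.ext_iff₂]
  rfl

def symplecticTransvection (u : l ⊕ l → R) (c : R) : Matrix (l ⊕ l) (l ⊕ l) R :=
  1 + c • vecMulVec u (J l R *ᵥ u)

theorem symplecticTransvection_mulVec (u : l ⊕ l → R) (c : R) (v : l ⊕ l → R) :
    symplecticTransvection u c *ᵥ v = v + (c * ω v u) • u := by
  rw [symplecticTransvection, add_mulVec, one_mulVec, smul_mulVec, vecMulVec_mulVec,
    symplecticForm_apply, dotProduct_comm, op_smul_eq_smul, smul_smul]

theorem symplecticTransvection_mem (u : l ⊕ l → R) (c : R) :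
    symplecticTransvection u c ∈ symplecticGroup l R := by
  have H := symplecticForm_isAlt (l := l) (R := R)
  refine mem_symplecticGroup_iff_symplecticForm.mpr fun v w => ?_
  simp only [symplecticTransvection_mulVec, map_add, map_smul, LinearMap.add_apply,
    LinearMap.smul_apply, H.self_eq_zero, ← H.neg w u, smul_eq_mul]
  ring

end CommRing

section Field

variable [Field K]

theorem exists_symplecticForm_ne_zero {x : l ⊕ l → K} (hx : x ≠ 0) : ∃ y, ω x y ≠ 0 := by
  have hJ := separatingLeft_def.mp
    (nondegenerate_of_det_ne_zero (isUnit_det_J l K).ne_zero).separatingLeft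
  by_contra! h
  exact hx (hJ x fun y => (symplecticForm_apply x y).symm.trans (h y))

theorem exists_symplecticForm_ne_zero_and_ne_zero {x y : l ⊕ l → K} (hx : x ≠ 0)
    (hy : y ≠ 0) : ∃ c, ω x c ≠ 0 ∧ ω c y ≠ 0 := by
  have H := symplecticForm_isAlt (l := l) (R := K)
  obtain ⟨c₁, hc₁⟩ := exists_symplecticForm_ne_zero hx
  obtain ⟨c₂, hc₂⟩ := exists_symplecticForm_ne_zero hy
  rw [← H.neg, neg_ne_zero] at hc₂
  by_cases h₁ : ω c₁ y = 0
  · by_cases h₂ : ω x c₂ = 0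
    · exact ⟨c₁ + c₂, by simpa [h₂], by simpa [h₁]⟩
    · exact ⟨c₂, h₂, hc₂⟩
  · exact ⟨c₁, hc₁, h₁⟩

theorem SymplecticGroup.exists_mulVec_eq_fixing_orthogonal {a b : l ⊕ l → K} (h : ω a b ≠ 0) :
    ∃ g ∈ symplecticGroup l K, g *ᵥ a = b ∧ ∀ v, ω v (b - a) = 0 → g *ᵥ v = v := by
  have H := symplecticForm_isAlt (l := l) (R := K)
  refine ⟨symplecticTransvection (b - a) (ω a b)⁻¹, symplecticTransvection_mem _ _, ?_,
    fun v hv => by rw [symplecticTransvection_mulVec, hv, mul_zero, zero_smul, add_zero]⟩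
  rw [symplecticTransvection_mulVec, map_sub, H.self_eq_zero, sub_zero, inv_mul_cancel₀ h,
    one_smul, add_sub_cancel]

theorem SymplecticGroup.exists_mulVec_eq {x y : l ⊕ l → K} (hx : x ≠ 0) (hy : y ≠ 0) :
    ∃ g ∈ symplecticGroup l K, g *ᵥ x = y := by
  obtain ⟨c, hxc, hcy⟩ := exists_symplecticForm_ne_zero_and_ne_zero hx hy
  obtain ⟨g₁, hg₁, hg₁x, -⟩ := exists_mulVec_eq_fixing_orthogonal hxc
  obtain ⟨g₂, hg₂, hg₂c, -⟩ := exists_mulVec_eq_fixing_orthogonal hcy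
  exact ⟨g₂ * g₁, mul_mem hg₂ hg₁, by rw [← mulVec_mulVec, hg₁x, hg₂c]⟩

theorem SymplecticGroup.exists_fixing_mulVec_eq {x y y' : l ⊕ l → K} (h : ω x y = ω x y')
    (h₀ : ω x y ≠ 0) : ∃ g ∈ symplecticGroup l K, g *ᵥ x = x ∧ g *ᵥ y = y' := by
  have H := symplecticForm_isAlt (l := l) (R := K)
  by_cases hyy' : ω y y' = 0
  · -- the transvection from `y` to `y'` needs `ω y y' ≠ 0`; go through `m = x + y'` instead
    set m := x + y'
    have hym : ω y m ≠ 0 := by simpa [m, hyy', ← H.neg y x] using h₀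
    have hmy' : ω m y' ≠ 0 := by simpa [m, H.self_eq_zero, ← h] using h₀
    obtain ⟨g₁, hg₁, hg₁y, hfix₁⟩ := exists_mulVec_eq_fixing_orthogonal hym
    obtain ⟨g₂, hg₂, hg₂m, hfix₂⟩ := exists_mulVec_eq_fixing_orthogonal hmy'
    have hx₁ : g₁ *ᵥ x = x := hfix₁ x (by simp [m, H.self_eq_zero, h])
    have hx₂ : g₂ *ᵥ x = x := hfix₂ x (by simp [m, H.self_eq_zero])
    exact ⟨g₂ * g₁, mul_mem hg₂ hg₁, by rw [← mulVec_mulVec, hx₁, hx₂],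
      by rw [← mulVec_mulVec, hg₁y, hg₂m]⟩
  · obtain ⟨g, hg, hgy, hfix⟩ := exists_mulVec_eq_fixing_orthogonal hyy'
    exact ⟨g, hg, hfix x (by rw [map_sub, h, sub_self]), hgy⟩

theorem SymplecticGroup.exists_mulVec_eq_pair {x y x' y' : l ⊕ l → K} (h : ω x y = ω x' y')
    (h₀ : ω x y ≠ 0) : ∃ g ∈ symplecticGroup l K, g *ᵥ x = x' ∧ g *ᵥ y = y' := by
  have hx : x ≠ 0 := by rintro rfl; simp at h₀
  have hx' : x' ≠ 0 := by rintro rfl; simp [h] at h₀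
  obtain ⟨g₁, hg₁, hg₁x⟩ := exists_mulVec_eq hx hx'
  have hg₁y : ω x' (g₁ *ᵥ y) = ω x' y' := by
    rw [← h, ← hg₁x, mem_symplecticGroup_iff_symplecticForm.mp hg₁]
  obtain ⟨g₂, hg₂, hg₂x, hg₂y⟩ := exists_fixing_mulVec_eq hg₁y (by rwa [hg₁y, ← h])
  exact ⟨g₂ * g₁, mul_mem hg₂ hg₁, by rw [← mulVec_mulVec, hg₁x, hg₂x],
    by rw [← mulVec_mulVec, hg₂y]⟩

end Field

end Matrix

open Complex

theorem mem_SpR_iff {n : ℕ} {g : Matrix (Fin n ⊕ Fin n) (Fin n ⊕ Fin n) ℝ} :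
    g ∈ SpR n ↔ g ∈ symplecticGroup (Fin n) ℝ :=
  ⟨fun hg => SymplecticGroup.mem_iff'.mpr hg.2,
    fun hg => ⟨(SymplecticGroup.symplectic_det hg).ne_zero, SymplecticGroup.mem_iff'.mp hg⟩⟩

section Complexification

variable {m ι l : Type*} [Fintype ι] [DecidableEq l] [Fintype l]

theorem re_map_ofReal_mulVec (g : Matrix m ι ℝ) (z : ι → ℂ) (i : m) :
    ((g.map ofReal *ᵥ z) i).re = (g *ᵥ fun j => (z j).re) i := by
  simp [mulVec, dotProduct]

theorem im_map_ofReal_mulVec (g : Matrix m ι ℝ) (z : ι → ℂ) (i : m) :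
    ((g.map ofReal *ᵥ z) i).im = (g *ᵥ fun j => (z j).im) i := by
  simp [mulVec, dotProduct]

theorem symplecticForm_ofReal (x y : l ⊕ l → ℝ) : ω (ofReal ∘ x) (ofReal ∘ y) = (ω x y : ℂ) := by
  rw [symplecticForm_apply, symplecticForm_apply, ← map_J l ofRealHom]
  change _ = ofRealHom _
  rw [RingHom.map_dotProduct]
  congr 1
  ext i
  exact (RingHom.map_mulVec ofRealHom _ _ i).symm

end Complexification

theorem hform_self {n : ℕ} (z : Fin n ⊕ Fin n → ℂ) :
    hform n z z = (ω (fun i => (z i).im) (fun i => (z i).re) : ℂ) := by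
  have H := symplecticForm_isAlt (l := Fin n) (R := ℂ)
  set x := fun i => (z i).re
  set y := fun i => (z i).im
  set a : Fin n ⊕ Fin n → ℂ := ofReal ∘ x
  set b : Fin n ⊕ Fin n → ℂ := ofReal ∘ y
  have hz : z = a + I • b := by ext i; apply Complex.ext <;> simp [a, b, x, y]
  have hstar : star z = a - I • b := by ext i; apply Complex.ext <;> simp [a, b, x, y]
  rw [show hform n z z = I / 2 * ω (star z) z by rw [hform, symplecticForm_apply]; rfl, hstar,
    hz]
  simp only [map_add, map_sub, map_smul, LinearMap.sub_apply,
    LinearMap.smul_apply, H.self_eq_zero, ← H.neg b a, smul_eq_mul, a, b, symplecticForm_ofReal]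
  linear_combination (-(ω y x : ℂ)) * I_mul_I

theorem exists_mem_SpR_mulVec_eq_smul {n : ℕ} {z w : Fin n ⊕ Fin n → ℂ}
    (h : 0 < hform n z z * hform n w w) :
    ∃ g ∈ SpR n, ∃ μ : ℂ, μ ≠ 0 ∧ g.map ofReal *ᵥ z = μ • w := by
  rw [hform_self, hform_self, ← ofReal_mul, zero_lt_real] at h
  set x := fun i => (z i).re
  set y := fun i => (z i).im
  set x' := fun i => (w i).re
  set y' := fun i => (w i).im
  obtain ⟨hp, hq⟩ := mul_ne_zero_iff.mp h.ne'
  -- rescale `z` by `t` so that the pairing of its parts matches that of `w`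
  have hqp : 0 < ω y' x' / ω y x := div_pos_iff.mpr ((mul_pos_iff.mp h).imp And.symm And.symm)
  set t := √(ω y' x' / ω y x)
  have ht : t ≠ 0 := (Real.sqrt_pos.mpr hqp).ne'
  have hpair : ω (t • y) (t • x) = ω y' x' := by
    simp only [map_smul, LinearMap.smul_apply, smul_eq_mul, ← mul_assoc,
      Real.mul_self_sqrt hqp.le, t, div_mul_cancel₀ _ hp]
  obtain ⟨g, hg, hgy, hgx⟩ :=
    SymplecticGroup.exists_mulVec_eq_pair hpair (hpair ▸ hq)
  have hx : g *ᵥ x = t⁻¹ • x' := by rw [← hgx, mulVec_smul, inv_smul_smul₀ ht]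
  have hy : g *ᵥ y = t⁻¹ • y' := by rw [← hgy, mulVec_smul, inv_smul_smul₀ ht]
  refine ⟨g, mem_SpR_iff.mpr hg, ((t⁻¹ : ℝ) : ℂ), by simpa using ht, ?_⟩
  ext i
  apply Complex.ext
  · rw [re_map_ofReal_mulVec]
    exact (congrFun hx i).trans (by simp [x'])
  · rw [im_map_ofReal_mulVec]
    exact (congrFun hy i).trans (by simp [y'])

theorem sameOrbitSp_mk_of_hform_mul_pos {n : ℕ} {z w : Fin n ⊕ Fin n → ℂ} (hz : z ≠ 0)
    (hw : w ≠ 0) (h : 0 < hform n z z * hform n w w) :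
    SameOrbitSp n (Projectivization.mk ℂ z hz) (Projectivization.mk ℂ w hw) := by
  obtain ⟨g, hg, μ, hμ, hgz⟩ := exists_mem_SpR_mulVec_eq_smul h
  exact ⟨g, hg, z, hz, hgz ▸ smul_ne_zero hμ hw, rfl,
    (Projectivization.mk_eq_mk_iff' ℂ _ _ _ _).mpr ⟨μ, hgz.symm⟩⟩

theorem SpR_transitive_on_Dpos_Dneg_general (n : ℕ) :
    (∀ x y, x ∈ Dpos n → y ∈ Dpos n → SameOrbitSp n x y) ∧
      ∀ x y, x ∈ Dneg n → y ∈ Dneg n → SameOrbitSp n x y := by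
  constructor
  · rintro x y ⟨z, hz, hz₀, rfl⟩ ⟨w, hw, hw₀, rfl⟩
    exact sameOrbitSp_mk_of_hform_mul_pos hz hw (mul_pos hz₀ hw₀)
  · rintro x y ⟨z, hz, hz₀, rfl⟩ ⟨w, hw, hw₀, rfl⟩
    exact sameOrbitSp_mk_of_hform_mul_pos hz hw (mul_pos_of_neg_of_neg hz₀ hw₀)

/-- For `n ≥ 1`, the real symplectic group `Sp(2n,ℝ)`, viewed inside
`GL(2n,ℂ)`, acts transitively on the set `D⁺` of `h`-positive lines and
transitively on the set `D⁻` of `h`-negative lines. -/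
theorem SpR_transitive_on_Dpos_Dneg (n : ℕ) (hn : 1 ≤ n) :
    (∀ x y, x ∈ Dpos n → y ∈ Dpos n → SameOrbitSp n x y) ∧
      ∀ x y, x ∈ Dneg n → y ∈ Dneg n → SameOrbitSp n x y :=
  SpR_transitive_on_Dpos_Dneg_general n

end
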